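/- Clausen's identity in the special case: ₂F₁(1/8, 3/8; 1; z)² = ₃F₂(1/4, 2/4, 3/4; 1, 1; z) as formal power series, i.e. the square of Σ ((1/8)_n (3/8)_n)/(n!)² z^n equals Σ ((1/4)_n(1/2)_n(3/4)_n)/(n!)³ z^n. -/

import Mathlib

/-- Pochhammer symbol `(a)ₙ = a(a+1)⋯(a+n-1)` over `ℚ`. -/
def poch (a : ℚ) (n : ℕ) : ℚ := ∏ i ∈ Finset.range n, (a + i)

private def A (n : ℕ) : ℚ := poch (1/8) n * poch (3/8) n / ((n.factorial : ℚ) ^ 2)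

private def B (n : ℕ) : ℚ :=
  poch (1/4) n * poch (1/2) n * poch (3/4) n / ((n.factorial : ℚ) ^ 3)

private lemma poch_succ (a : ℚ) (n : ℕ) : poch a (n + 1) = poch a n * (a + n) :=
  Finset.prod_range_succ _ _

private lemma A_zero : A 0 = 1 := by simp [A, poch]

private lemma B_zero : B 0 = 1 := by simp [B, poch]

private lemma A_succ (n : ℕ) :
    A (n + 1) = A n * (((n : ℚ) + 1/8) * ((n : ℚ) + 3/8) / ((n : ℚ) + 1) ^ 2) := by
  have hf : (n.factorial : ℚ) ≠ 0 := Nat.cast_ne_zero.2 n.factorial_ne_zero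
  have hn1 : ((n : ℚ) + 1) ≠ 0 := by positivity
  simp only [A, poch_succ, Nat.factorial_succ, Nat.cast_mul, Nat.cast_add, Nat.cast_one]
  field_simp
  ring

private lemma B_succ (n : ℕ) :
    B (n + 1) = B n *
      (((n : ℚ) + 1/4) * ((n : ℚ) + 1/2) * ((n : ℚ) + 3/4) / ((n : ℚ) + 1) ^ 3) := by
  have hf : (n.factorial : ℚ) ≠ 0 := Nat.cast_ne_zero.2 n.factorial_ne_zero
  have hn1 : ((n : ℚ) + 1) ≠ 0 := by positivity
  simp only [B, poch_succ, Nat.factorial_succ, Nat.cast_mul, Nat.cast_add, Nat.cast_one]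
  field_simp
  ring

/-- WZ certificate `R(n,k) = k²(2k − 3n − 3)`. -/
private def cert (n k : ℕ) : ℚ := (k : ℚ) ^ 2 * (2 * k - 3 * n - 3)

private lemma wz (k m : ℕ) :
    ((k : ℚ) + m + 1) ^ 3 * A k * A (m + 1)
      - ((k : ℚ) + m + 1/4) * ((k : ℚ) + m + 1/2) * ((k : ℚ) + m + 3/4) * A k * A m
    = cert (k + m) (k + 1) * A (k + 1) * A m - cert (k + m) k * A k * A (m + 1) := by
  have hk1 : ((k : ℚ) + 1) ≠ 0 := by positivity
  have hm1 : ((m : ℚ) + 1) ≠ 0 := by positivity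
  rw [A_succ k, A_succ m, cert, cert]
  push_cast
  field_simp
  ring

private def S (n : ℕ) : ℚ := ∑ k ∈ Finset.range (n + 1), A k * A (n - k)

private lemma S_rec (n : ℕ) :
    ((n : ℚ) + 1) ^ 3 * S (n + 1)
      = ((n : ℚ) + 1/4) * ((n : ℚ) + 1/2) * ((n : ℚ) + 3/4) * S n := by
  have key : ∑ k ∈ Finset.range (n + 1),
      (((n : ℚ) + 1) ^ 3 * (A k * A (n + 1 - k))
        - ((n : ℚ) + 1/4) * ((n : ℚ) + 1/2) * ((n : ℚ) + 3/4) * (A k * A (n - k)))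
      = ∑ k ∈ Finset.range (n + 1),
        ((fun j => cert n j * A j * A (n + 1 - j)) (k + 1)
          - (fun j => cert n j * A j * A (n + 1 - j)) k) := by
    apply Finset.sum_congr rfl
    intro k hk
    have hk' : k ≤ n := Nat.lt_succ_iff.mp (Finset.mem_range.mp hk)
    obtain ⟨m, hm⟩ : ∃ m, n = k + m := ⟨n - k, by omega⟩
    subst hm
    have h1 : k + m + 1 - k = m + 1 := by omega
    have h2 : k + m - k = m := by omega
    have h3 : k + m + 1 - (k + 1) = m := by omega
    simp only [h1, h2, h3]
    have := wz k m
    push_cast at this ⊢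
    linarith [this]
  rw [Finset.sum_sub_distrib, ← Finset.mul_sum, ← Finset.mul_sum,
    Finset.sum_range_sub (fun j => cert n j * A j * A (n + 1 - j))] at key
  have hS1 : S (n + 1) = (∑ k ∈ Finset.range (n + 1), A k * A (n + 1 - k)) + A (n + 1) * A 0 := by
    rw [S, Finset.sum_range_succ]
    simp
  have hc0 : cert n 0 * A 0 * A (n + 1 - 0) = 0 := by simp [cert]
  have hcn : cert n (n + 1) = -((n : ℚ) + 1) ^ 3 := by
    simp only [cert]
    push_cast
    ring
  have hn1 : n + 1 - (n + 1) = 0 := by omega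
  rw [hc0, hcn, hn1, sub_zero] at key
  rw [hS1, S]
  rw [A_zero] at *
  nlinarith [key]

private lemma S_eq_B (n : ℕ) : S n = B n := by
  induction n with
  | zero => simp [S, B_zero, A_zero]
  | succ n ih =>
    have h := S_rec n
    rw [ih, B_succ n] at *
    have hn1 : ((n : ℚ) + 1) ^ 3 ≠ 0 := by positivity
    field_simp at h ⊢
    linarith [h]

theorem clausen_identity_special_case :
    (PowerSeries.mk fun n : ℕ =>
        poch (1/8) n * poch (3/8) n / ((n.factorial : ℚ) ^ 2)) ^ 2 =
      PowerSeries.mk fun n : ℕ =>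
        poch (1/4) n * poch (1/2) n * poch (3/4) n / ((n.factorial : ℚ) ^ 3) := by
  ext n
  rw [sq, PowerSeries.coeff_mul, PowerSeries.coeff_mk]
  have : ∀ p ∈ Finset.HasAntidiagonal.antidiagonal n,
      (PowerSeries.coeff p.1) (PowerSeries.mk fun n : ℕ =>
        poch (1/8) n * poch (3/8) n / ((n.factorial : ℚ) ^ 2)) *
      (PowerSeries.coeff p.2) (PowerSeries.mk fun n : ℕ =>
        poch (1/8) n * poch (3/8) n / ((n.factorial : ℚ) ^ 2)) = A p.1 * A p.2 := by
    intro p _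
    simp [A]
  rw [Finset.sum_congr rfl this, Finset.Nat.sum_antidiagonal_eq_sum_range_succ_mk]
  have := S_eq_B n
  rw [S, B] at this
  exact this
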